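/- Let w be a word and v a primitive word of length l such that v^{Index_w(v)} is a factor of w and Index_w(v) ≥ 2. Then for every integer t with 1 ≤ t ≤ |Class_w(v)| and every conjugate u of v, the fractional power u^{(t+l)/l} (the prefix of length t + l of the infinite periodic word uuu···) is a factor of w. -/
import Mathlib


/-- `wpow u t` is the concatenation of `t` copies of the word `u`. -/
def wpow {α : Type*} (u : List α) (t : ℕ) : List α := (List.replicate t u).flatten

/-- A word is primitive if it is nonempty and not a power `u^n` with `n ≥ 2`. -/
def Primitive {α : Type*} (v : List α) : Prop :=
  v ≠ [] ∧ ∀ (u : List α) (n : ℕ), 2 ≤ n → v ≠ wpow u n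

/-- `classW w v` : the set of factors of `w` of the form `y^p` with `y` a conjugate
(rotation) of `v` and `p ≥ 2`. -/
def classW {α : Type*} (w v : List α) : Set (List α) :=
  {x | x <:+: w ∧ ∃ (y : List α) (p : ℕ), y ~r v ∧ 2 ≤ p ∧ x = wpow y p}

/-- `indexW w v = max { n ≥ 1 | u^n is a factor of w for some conjugate u of v }`,
i.e. `Index_w(v) = max { m_w(u) | u ∈ [v] }`. -/
noncomputable def indexW {α : Type*} (w v : List α) : ℕ :=
  sSup {n : ℕ | ∃ u : List α, u ~r v ∧ wpow u n <:+: w}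

/-- `maxPowW w v = { u^{Index_w(v)} | u ∈ [v] } ∩ Fac(w)`. -/
noncomputable def maxPowW {α : Type*} (w v : List α) : Set (List α) :=
  {x | (∃ u : List α, u ~r v ∧ x = wpow u (indexW w v)) ∧ x <:+: w}

/-- `fracPow u m` : the prefix of length `m` of the infinite periodic word `uuu⋯`. -/
def fracPow {α : Type*} (u : List α) (m : ℕ) : List α := (wpow u m).take m

theorem wpow_zero {α : Type*} (u : List α) : wpow u 0 = [] := rfl

theorem wpow_succ {α : Type*} (u : List α) (n : ℕ) : wpow u (n+1) = u ++ wpow u n := by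
  simp [wpow, List.replicate_succ]

theorem wpow_one {α : Type*} (u : List α) : wpow u 1 = u := by
  simp [wpow_succ, wpow_zero]

theorem wpow_length {α : Type*} (u : List α) (n : ℕ) : (wpow u n).length = n * u.length := by
  induction n with
  | zero => simp [wpow_zero]
  | succ n ih => simp [wpow_succ, ih]; ring

theorem wpow_add {α : Type*} (u : List α) (m n : ℕ) : wpow u (m+n) = wpow u m ++ wpow u n := by
  induction m with
  | zero => simp [wpow_zero]
  | succ m ih =>
    have : m + 1 + n = (m + n) + 1 := by omega
    rw [this, wpow_succ, ih, wpow_succ, List.append_assoc]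

theorem wpow_append_swap {α : Type*} (a b : List α) (n : ℕ) :
    wpow (a ++ b) (n+1) = a ++ wpow (b ++ a) n ++ b := by
  induction n with
  | zero => simp [wpow_one, wpow_zero]
  | succ n ih =>
    rw [wpow_succ, ih]
    rw [show wpow (b ++ a) (n+1) = (b ++ a) ++ wpow (b ++ a) n from wpow_succ _ _]
    simp [List.append_assoc]

/-- `fracPow` at multiples of the period is just `wpow`. -/
theorem fracPow_mul {α : Type*} (u : List α) (hu : u ≠ []) (p : ℕ) :
    fracPow u (p * u.length) = wpow u p := by
  have hul : 0 < u.length := List.length_pos_iff.mpr hu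
  rcases Nat.eq_zero_or_pos p with rfl | hp
  · simp [fracPow, wpow_zero]
  have hple : p ≤ p * u.length := Nat.le_mul_of_pos_right p hul
  rw [fracPow, show p * u.length = p + (p * u.length - p) by omega, wpow_add,
    ← show p * u.length = p + (p * u.length - p) by omega]
  rw [List.take_append_of_le_length (by rw [wpow_length])]
  exact List.take_of_length_le (by rw [wpow_length])

/-- Shorter fractional powers are prefixes of longer ones. -/
theorem fracPow_take {α : Type*} (u : List α) (hu : u ≠ []) {a b : ℕ} (hab : a ≤ b) :
    fracPow u a = (fracPow u b).take a := by
  have hul : 0 < u.length := List.length_pos_iff.mpr hu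
  have h1 : (fracPow u b).take a = (wpow u b).take a := by
    rw [fracPow, List.take_take, min_eq_left hab]
  rw [h1, fracPow, show b = a + (b - a) by omega, wpow_add,
    List.take_append_of_le_length (by rw [wpow_length]; nlinarith)]

theorem fracPow_length {α : Type*} (u : List α) (hu : u ≠ []) (m : ℕ) :
    (fracPow u m).length = m := by
  have hul : 0 < u.length := List.length_pos_iff.mpr hu
  rw [fracPow, List.length_take, wpow_length]
  exact min_eq_left (by nlinarith)

/-- The key combinatorial lemma: inside `(u.rotate n)^p` one finds the fractional
power of `u` of exponent `(p·|u| - (|u| - n) % |u|) / |u|`. -/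
theorem fracPow_infix_pow_rotate {α : Type*} (u : List α) (hu : u ≠ []) (n p : ℕ)
    (hn : n < u.length) (hp : 1 ≤ p) :
    fracPow u (p * u.length - (u.length - n) % u.length) <:+: wpow (u.rotate n) p := by
  have hul : 0 < u.length := List.length_pos_iff.mpr hu
  rcases Nat.eq_zero_or_pos n with rfl | hn1
  · rw [Nat.sub_zero, Nat.mod_self, Nat.sub_zero, List.rotate_zero, fracPow_mul u hu p]
  · have hmod : (u.length - n) % u.length = u.length - n :=
      Nat.mod_eq_of_lt (by omega)
    rw [hmod]
    obtain ⟨p', rfl⟩ : ∃ p', p = p' + 1 := ⟨p - 1, by omega⟩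
    have hq : (p' + 1) * u.length - (u.length - n) = p' * u.length + n := by
      have : (p' + 1) * u.length = p' * u.length + u.length := by ring
      omega
    rw [hq]
    set A := u.drop n with hA
    set B := u.take n with hB
    have hBA : B ++ A = u := List.take_append_drop n u
    have hrot : u.rotate n = A ++ B := List.rotate_eq_drop_append_take (le_of_lt hn)
    have hAl : A.length = u.length - n := by simp [hA]
    have hexp : wpow (u.rotate n) (p' + 1) = A ++ (wpow u p' ++ B) := by
      rw [hrot, wpow_append_swap, hBA, List.append_assoc]
    have hfp : fracPow u (p' * u.length + n) = wpow u p' ++ B := by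
      rw [fracPow]
      have hle : p' * u.length + n ≤ (p' + 1) * u.length := by nlinarith
      have hge : p' + 1 ≤ p' * u.length + n := by nlinarith
      rw [show p' * u.length + n = (p' + 1) + (p' * u.length + n - (p' + 1)) by omega,
        wpow_add, ← show p' * u.length + n = (p' + 1) + (p' * u.length + n - (p' + 1)) by omega]
      rw [List.take_append_of_le_length (by rw [wpow_length]; omega)]
      rw [show (p' : ℕ) + 1 = p' + 1 from rfl, wpow_add, wpow_one]
      rw [List.take_append, wpow_length,
        List.take_of_length_le (by rw [wpow_length]; omega)]
      congr 1
      rw [hB]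
      congr 1
      omega
    rw [hfp, hexp]
    exact ((List.suffix_append A (wpow u p' ++ B)).isInfix)

/-- If `v` is primitive of length `l`, `v^{Index_w(v)}` is a factor
of `w` and `Index_w(v) ≥ 2`, then for every `1 ≤ t ≤ |Class_w(v)|` and every
conjugate `u` of `v`, the fractional power `u^{(t+l)/l}` is a factor of `w`. -/
theorem fracPow_isInfix {α : Type*} (w v : List α) (l : ℕ) (hl : v.length = l)
    (hv : Primitive v) (hfac : wpow v (indexW w v) <:+: w) (hidx : 2 ≤ indexW w v)
    (t : ℕ) (ht1 : 1 ≤ t) (ht2 : t ≤ (classW w v).ncard)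
    (u : List α) (hu : u ~r v) :
    fracPow u (t + l) <:+: w := by
  have hl1 : 1 ≤ l := by
    rw [← hl]
    exact List.length_pos_iff.mpr hv.1
  have hul : u.length = l := by rw [hu.perm.length_eq, hl]
  have hune : u ≠ [] := by
    intro h
    rw [h] at hul
    simp at hul
    omega
  set S : Set ℕ := {q | l < q ∧ fracPow u q <:+: w} with hS
  set g : List α → ℕ :=
    fun x => x.length - ((l - sInf {n | u.rotate n = x.take l}) % l) with hg
  -- the structure of elements of classW and the value of g on them
  have hdata : ∀ x ∈ classW w v, ∃ p n, 2 ≤ p ∧ n < l ∧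
      x = wpow (u.rotate n) p ∧ g x = p * l - ((l - n) % l) := by
    rintro x ⟨hxw, y, p, hyv, hp2, rfl⟩
    have hyl : y.length = l := by rw [hyv.perm.length_eq, hl]
    have hxlen : (wpow y p).length = p * l := by rw [wpow_length, hyl]
    have htake : (wpow y p).take l = y := by
      obtain ⟨p', rfl⟩ : ∃ p', p = p' + 1 := ⟨p - 1, by omega⟩
      rw [wpow_succ, List.take_left' hyl]
    obtain ⟨n', hn'⟩ : u ~r y := hu.trans hyv.symm
    have hTne : u.rotate (n' % u.length) = y := by rw [List.rotate_mod, hn']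
    set n₀ := sInf {n | u.rotate n = y} with hn₀
    have hn₀mem : n₀ ∈ {n | u.rotate n = y} :=
      Nat.sInf_mem (⟨n' % u.length, hTne⟩ : Set.Nonempty _)
    rw [Set.mem_setOf_eq] at hn₀mem
    have hn₀lt : n₀ < l := by
      have h1 : n₀ ≤ n' % u.length := Nat.sInf_le hTne
      have h2 : n' % u.length < u.length := Nat.mod_lt _ (by omega)
      omega
    refine ⟨p, n₀, hp2, hn₀lt, by rw [hn₀mem], ?_⟩
    rw [hg]
    simp only []
    rw [hxlen, htake, ← hn₀]
  -- g maps classW into S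
  have hmaps : ∀ x ∈ classW w v, g x ∈ S := by
    intro x hx
    obtain ⟨p, n, hp2, hnl, hxval, hgval⟩ := hdata x hx
    have hm : (l - n) % l < l := Nat.mod_lt _ (by omega)
    have hpl : 2 * l ≤ p * l := Nat.mul_le_mul_right l hp2
    constructor
    · omega
    · rw [hgval]
      have := fracPow_infix_pow_rotate u hune n p (by omega) (by omega)
      rw [hul] at this
      refine this.trans ?_
      rw [← hxval]
      exact hx.1
  -- g is injective on classW
  have hinj : Set.InjOn g (classW w v) := by
    intro x1 hx1 x2 hx2 heq
    obtain ⟨p1, n1, hp1, hn1, hx1v, hg1⟩ := hdata x1 hx1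
    obtain ⟨p2, n2, hp2, hn2, hx2v, hg2⟩ := hdata x2 hx2
    rw [hg1, hg2] at heq
    have hm1 : (l - n1) % l < l := Nat.mod_lt _ (by omega)
    have hm2 : (l - n2) % l < l := Nat.mod_lt _ (by omega)
    have hP1 : 2 * l ≤ p1 * l := Nat.mul_le_mul_right l hp1
    have hP2 : 2 * l ≤ p2 * l := Nat.mul_le_mul_right l hp2
    have hpe : p1 = p2 := by
      rcases lt_trichotomy p1 p2 with h | h | h
      · exfalso
        have : p1 + 1 ≤ p2 := h
        have : (p1 + 1) * l ≤ p2 * l := Nat.mul_le_mul_right l this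
        have hx : (p1 + 1) * l = p1 * l + l := by ring
        omega
      · exact h
      · exfalso
        have : p2 + 1 ≤ p1 := h
        have : (p2 + 1) * l ≤ p1 * l := Nat.mul_le_mul_right l this
        have hx : (p2 + 1) * l = p2 * l + l := by ring
        omega
    subst hpe
    have hme : (l - n1) % l = (l - n2) % l := by omega
    have hne : n1 = n2 := by
      rcases Nat.eq_zero_or_pos n1 with rfl | h1 <;>
        rcases Nat.eq_zero_or_pos n2 with rfl | h2
      · rfl
      · rw [Nat.sub_zero, Nat.mod_self,
          Nat.mod_eq_of_lt (show l - n2 < l by omega)] at hme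
        omega
      · rw [Nat.sub_zero, Nat.mod_self,
          Nat.mod_eq_of_lt (show l - n1 < l by omega)] at hme
        omega
      · rw [Nat.mod_eq_of_lt (show l - n1 < l by omega),
          Nat.mod_eq_of_lt (show l - n2 < l by omega)] at hme
        omega
    rw [hx1v, hx2v, hne]
  -- S is finite
  have hSfin : S.Finite := by
    apply Set.Finite.subset (Set.finite_Iic w.length)
    intro q hq
    have := hq.2.length_le
    rw [fracPow_length u hune] at this
    exact this
  -- counting
  have hcard : (classW w v).ncard ≤ S.ncard :=
    Set.ncard_le_ncard_of_injOn g hmaps hinj hSfin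
  have hSne : S.Nonempty := by
    apply Set.nonempty_of_ncard_ne_zero
    omega
  have hbdd : BddAbove S := hSfin.bddAbove
  set M := sSup S with hM
  have hMS : M ∈ S := Nat.sSup_mem hSne hbdd
  have hsub : S ⊆ Set.Ioc l M := by
    intro q hq
    exact ⟨hq.1, le_csSup hbdd hq⟩
  have hcard2 : S.ncard ≤ M - l := by
    have h1 : S.ncard ≤ (Set.Ioc l M).ncard :=
      Set.ncard_le_ncard hsub (by rw [← Finset.coe_Ioc]; exact (Finset.Ioc l M).finite_toSet)
    have h2 : (Set.Ioc l M).ncard = M - l := by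
      rw [← Finset.coe_Ioc, Set.ncard_coe_finset, Nat.card_Ioc]
    omega
  have htlM : t + l ≤ M := by omega
  have hfinal : fracPow u (t + l) = (fracPow u M).take (t + l) :=
    fracPow_take u hune htlM
  rw [hfinal]
  exact ((fracPow u M).take_prefix (t + l)).isInfix.trans hMS.2
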